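/- arXiv:1012.0498 — 5 statements merged into one kernel-verified Lean document; each statement's English description precedes it below -/
import Mathlib

section
/- (Proposition 1) For every n ≥ 1, every fixed permutation π of {1,…,n}, and every integer h ≥ 1, the normalization constant of the triangular kernel, C(h) = Σ_{σ : T(σ,π) ≤ h} (1 − T(σ,π)/h), satisfies C(h) = Σ_{k=0}^{h} [z^k]G_n − (1/h)·Σ_{k=0}^{h−1} [z^k]G_n′, i.e. C(h) = [z^h](G_n(z)/(1−z)) − h^{−1}[z^{h−1}](G_n′(z)/(1−z)); in particular C(h) does not depend on the choice of π. -/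
/-!
Relabelling positions by `π` turns `kendall σ π` into the number of inversions of `σ * π⁻¹`, so
`C(h) = ∑_{k ≤ h} (1 - k/h) · #{τ | inv τ = k}`. The permutations of `Fin (n + 1)` are in
bijection with pairs (position `p` of the value `0`, permutation of the remaining values), and
such a permutation has `p` more inversions than the remaining one; hence the inversion
generating function satisfies `G_{n+1} = G_n · (1 + z + ⋯ + z^n)` and equals `G_n`. Finally
`∑_{k ≤ h} k [z^k] G = ∑_{k < h} [z^k] G'`.
-/

/-- Kendall's tau distance between two permutations of `Fin n`. -/
def kendall {n : ℕ} (π σ : Equiv.Perm (Fin n)) : ℕ :=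
  (Finset.univ.filter (fun p : Fin n × Fin n =>
    p.1 < p.2 ∧ ((π p.1 < π p.2) ↔ ¬ (σ p.1 < σ p.2)))).card

/-- The generating polynomial `G_n(z) = ∏_{j=1}^{n-1} (1 + z + ⋯ + z^j)`. -/
noncomputable def genG (n : ℕ) : Polynomial ℤ :=
  ∏ j ∈ Finset.Icc 1 (n - 1), ∑ k ∈ Finset.range (j + 1), Polynomial.X ^ k

open Finset Polynomial

theorem card_filter_lt_and_symm_eq_of_injective {α β : Type*} [Fintype α] [LinearOrder α]
    [LinearOrder β] {f : α → β} (hf : Function.Injective f) (r : α → α → Prop) [DecidableRel r]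
    (hr : ∀ a b, r a b → r b a) :
    #{p : α × α | p.1 < p.2 ∧ r p.1 p.2} = #{p : α × α | f p.1 < f p.2 ∧ r p.1 p.2} := by
  refine card_nbij' (fun p => if f p.1 < f p.2 then p else p.swap)
    (fun p => if p.1 < p.2 then p else p.swap) ?_ ?_ ?_ ?_ <;>
  · rintro ⟨a, b⟩ hp
    simp only [coe_filter, mem_univ, true_and] at hp ⊢
    grind

theorem Polynomial.sum_range_coeff_derivative {R : Type*} [Semiring R] (P : R[X]) (h : ℕ) :
    ∑ k ∈ range h, (derivative P).coeff k = ∑ k ∈ range (h + 1), P.coeff k * k := by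
  simp only [coeff_derivative, sum_range_succ' _ h, Nat.cast_zero, mul_zero, add_zero]
  push_cast
  rfl

theorem Polynomial.sum_range_coeff_mul_one_sub_div {K : Type*} [Field K] (P : K[X]) (h : ℕ) :
    ∑ k ∈ range (h + 1), P.coeff k * (1 - k / h) =
      ∑ k ∈ range (h + 1), P.coeff k - 1 / h * ∑ k ∈ range h, (derivative P).coeff k := by
  rw [sum_range_coeff_derivative, mul_sum, ← sum_sub_distrib]
  refine sum_congr rfl fun k _ => ?_
  ring

theorem Finset.sum_filter_le_eq_sum_range_coeff_mul {α R : Type*} [CommSemiring R]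
    (s : Finset α) (f : α → ℕ) (g : ℕ → R) (h : ℕ) :
    ∑ a ∈ s with f a ≤ h, g (f a) =
      ∑ k ∈ range (h + 1), (∑ a ∈ s, (X : R[X]) ^ f a).coeff k * g k := by
  simp only [finsetSum_coeff, coeff_X_pow, sum_mul, ite_mul, one_mul, zero_mul]
  rw [sum_comm, sum_filter]
  refine sum_congr rfl fun a _ => ?_
  simp [sum_ite_eq']

namespace Equiv.Perm

variable {n : ℕ}

def invCount (σ : Perm (Fin n)) : ℕ := #{p : Fin n × Fin n | p.1 < p.2 ∧ σ p.2 < σ p.1}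

theorem kendall_eq_invCount_mul_inv (σ π : Perm (Fin n)) :
    kendall σ π = invCount (σ * π⁻¹) := by
  unfold kendall
  -- count the discordant pairs in the order of their `π`-values instead of their positions
  rw [card_filter_lt_and_symm_eq_of_injective π.injective (fun a b => σ a < σ b ↔ ¬ π a < π b)
    fun a b => by grind [Equiv.apply_eq_iff_eq]]
  refine card_equiv (π.prodCongr π) fun ⟨a, b⟩ => ?_
  rw [mem_filter, mem_filter]
  simp only [mem_univ, not_lt, true_and, prodCongr_apply, Prod.map_apply, coe_mul, coe_inv,
    Function.comp_apply, symm_apply_apply, and_congr_right_iff]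
  intro hab
  have hσ : σ b ≠ σ a := σ.injective.ne (ne_of_apply_ne π hab.ne')
  simpa [not_le.mpr hab] using hσ.le_iff_lt

def insertZero (p : Fin (n + 1)) (e : Perm (Fin n)) : Perm (Fin (n + 1)) :=
  ((finSuccEquiv' p).trans e.optionCongr).trans (finSuccEquiv' 0).symm

@[simp]
theorem insertZero_apply_self (p : Fin (n + 1)) (e : Perm (Fin n)) : insertZero p e p = 0 := by
  simp [insertZero]

@[simp]
theorem insertZero_apply_succAbove (p : Fin (n + 1)) (e : Perm (Fin n)) (i : Fin n) :
    insertZero p e (p.succAbove i) = (e i).succ := by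
  simp [insertZero, Fin.zero_succAbove]

theorem insertZero_apply_pos {p i : Fin (n + 1)} (e : Perm (Fin n)) (hi : i ≠ p) :
    0 < insertZero p e i :=
  Fin.pos_of_ne_zero fun h =>
    hi ((insertZero p e).injective (h.trans (insertZero_apply_self p e).symm))

theorem insertZero_injective :
    Function.Injective fun pe : Fin (n + 1) × Perm (Fin n) => insertZero pe.1 pe.2 := by
  rintro ⟨p, e⟩ ⟨q, f⟩ hpq
  simp only at hpq
  obtain rfl : p = q := (insertZero p e).injective <| by
    rw [insertZero_apply_self, hpq, insertZero_apply_self]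
  have : ∀ i, e i = f i := fun i => Fin.succ_injective _ <| by
    rw [← insertZero_apply_succAbove, hpq, insertZero_apply_succAbove]
  simp [Equiv.ext this]

theorem insertZero_bijective :
    Function.Bijective fun pe : Fin (n + 1) × Perm (Fin n) => insertZero pe.1 pe.2 := by
  rw [Fintype.bijective_iff_injective_and_card]
  exact ⟨insertZero_injective, by simp [Fintype.card_perm, Nat.factorial_succ]⟩

theorem invCount_insertZero (p : Fin (n + 1)) (e : Perm (Fin n)) :
    invCount (insertZero p e) = p + invCount e := by
  rw [invCount, ← card_filter_add_card_filter_not (fun q => q.2 = p), filter_filter,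
    filter_filter]
  congr 1
  · have : ({q | (q.1 < q.2 ∧ insertZero p e q.2 < insertZero p e q.1) ∧ q.2 = p} :
        Finset (Fin (n + 1) × Fin (n + 1))) = Iio p ×ˢ {p} := by
      ext ⟨i, j⟩
      simp only [mem_filter, mem_univ, true_and, mem_product, mem_Iio, mem_singleton]
      grind [insertZero_apply_self, insertZero_apply_pos]
    rw [this, card_product, card_singleton, Fin.card_Iio, mul_one]
  · symm
    refine card_bij (fun a _ => (p.succAbove a.1, p.succAbove a.2)) ?_ ?_ ?_
    · rintro ⟨a, b⟩ hab
      simp_all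
    · intro a _ b _ h
      simpa [Prod.ext_iff] using h
    · rintro ⟨i, j⟩ hij
      simp only [mem_filter, mem_univ, true_and] at hij
      obtain ⟨⟨hij, hτ⟩, hj⟩ := hij
      have hi : i ≠ p := by rintro rfl; simp at hτ
      obtain ⟨a, rfl⟩ := Fin.exists_succAbove_eq hi
      obtain ⟨b, rfl⟩ := Fin.exists_succAbove_eq hj
      exact ⟨(a, b), by simp_all, rfl⟩

end Equiv.Perm

open Equiv.Perm

theorem genG_succ (n : ℕ) : genG (n + 1) = genG n * ∑ k ∈ range (n + 1), X ^ k := by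
  cases n with
  | zero => simp [genG]
  | succ m => simpa only [genG, Nat.add_sub_cancel] using prod_Icc_succ_top (by omega) _

theorem sum_X_pow_invCount (n : ℕ) :
    ∑ σ : Equiv.Perm (Fin n), (X : ℤ[X]) ^ invCount σ = genG n := by
  induction n with
  | zero => simp [genG, invCount]
  | succ m ih =>
    rw [← insertZero_bijective.sum_comp, Fintype.sum_prod_type]
    simp only [invCount_insertZero, pow_add]
    rw [← sum_mul_sum, ih, genG_succ, mul_comm,
      Fin.sum_univ_eq_sum_range (fun k => (X : ℤ[X]) ^ k)]

theorem triangular_kernel_normalization_general (n : ℕ)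
    (π : Equiv.Perm (Fin n)) (h : ℕ) :
    (∑ σ ∈ Finset.univ.filter
        (fun σ : Equiv.Perm (Fin n) => kendall σ π ≤ h),
        (1 - (kendall σ π : ℚ) / (h : ℚ)))
      = (∑ k ∈ Finset.range (h + 1), ((genG n).coeff k : ℚ))
        - (1 / (h : ℚ)) *
          ∑ k ∈ Finset.range h, ((Polynomial.derivative (genG n)).coeff k : ℚ) := by
  have hG : (genG n).map (Int.castRingHom ℚ) = ∑ τ : Equiv.Perm (Fin n), X ^ invCount τ := by
    simp [← sum_X_pow_invCount, Polynomial.map_sum]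
  calc _ = ∑ τ : Equiv.Perm (Fin n) with invCount τ ≤ h, (1 - (invCount τ : ℚ) / h) :=
        sum_equiv (Equiv.mulRight π⁻¹) (by simp [kendall_eq_invCount_mul_inv])
          (by simp [kendall_eq_invCount_mul_inv])
    _ = ∑ k ∈ range (h + 1), ((genG n).map (Int.castRingHom ℚ)).coeff k * (1 - k / h) := by
        rw [hG]
        exact sum_filter_le_eq_sum_range_coeff_mul _ _ (fun k => 1 - (k : ℚ) / h) h
    _ = _ := by
        rw [sum_range_coeff_mul_one_sub_div, derivative_map]
        simp

/-- Proposition 1: the normalization constant of the triangular kernel,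
`C(h) = Σ_{σ : T(σ,π) ≤ h} (1 − T(σ,π)/h)`, equals
`Σ_{k=0}^{h} [z^k]G_n − (1/h)·Σ_{k=0}^{h-1} [z^k]G_n'`, i.e.
`[z^h](G_n(z)/(1−z)) − h⁻¹ [z^{h-1}](G_n'(z)/(1−z))`; in particular it does not
depend on the choice of `π`. -/
theorem triangular_kernel_normalization (n : ℕ) (hn : 1 ≤ n)
    (π : Equiv.Perm (Fin n)) (h : ℕ) (hh : 1 ≤ h) :
    (∑ σ ∈ Finset.univ.filter
        (fun σ : Equiv.Perm (Fin n) => kendall σ π ≤ h),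
        (1 - (kendall σ π : ℚ) / (h : ℚ)))
      = (∑ k ∈ Finset.range (h + 1), ((genG n).coeff k : ℚ))
        - (1 / (h : ℚ)) *
          ∑ k ∈ Finset.range h, ((Polynomial.derivative (genG n)).coeff k : ℚ) :=
  triangular_kernel_normalization_general n π h
end

section
/- Let U be a tied incomplete ranking on {1,…,n} with consistent set S_U, and let i, j be distinct items neither of which is ranked in U (i.e. i, j ∉ B_U). Then exactly half of the permutations in S_U rank i before j: #{π ∈ S_U : π(i) < π(j)} = #{π ∈ S_U : π(j) < π(i)} = |S_U|/2. -/
/-- A tied incomplete ranking on `{1,…,n}`: a sequence `A 0, …, A (K-1)` of nonempty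
pairwise disjoint subsets of `Fin n`; all items in `A s` are preferred to all items
in `A t` for `s < t`. -/
structure TIR (n : ℕ) where
  K : ℕ
  A : Fin K → Finset (Fin n)
  nonempty : ∀ s, (A s).Nonempty
  disjoint : ∀ s t, s ≠ t → Disjoint (A s) (A t)

/-- The set of permutations consistent with a tied incomplete ranking `U`. -/
def TIR.consistent {n : ℕ} (U : TIR n) : Finset (Equiv.Perm (Fin n)) :=
  Finset.univ.filter (fun π => ∀ s t : Fin U.K, s < t →
    ∀ a ∈ U.A s, ∀ b ∈ U.A t, π a < π b)

/-- The set `B_U` of items ranked by `U`. -/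
def TIR.ranked {n : ℕ} (U : TIR n) : Finset (Fin n) :=
  Finset.univ.biUnion U.A

/-- If neither `i` nor `j` is ranked in `U`, then exactly half of the permutations
consistent with `U` rank `i` before `j`. -/
theorem unranked_pair_half (n : ℕ) (U : TIR n) (i j : Fin n) (hij : i ≠ j)
    (hi : i ∉ U.ranked) (hj : j ∉ U.ranked) :
    (U.consistent.filter (fun π => π i < π j)).card
        = (U.consistent.filter (fun π => π j < π i)).card
    ∧ ((U.consistent.filter (fun π => π i < π j)).card : ℚ)
        = (U.consistent.card : ℚ) / 2 := by
  have hswap : ∀ a : Fin n, a ∈ U.ranked → Equiv.swap i j a = a := by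
    intro a ha
    exact Equiv.swap_apply_of_ne_of_ne (fun h => hi (h ▸ ha)) (fun h => hj (h ▸ ha))
  have hmem : ∀ π : Equiv.Perm (Fin n), π ∈ U.consistent →
      π * Equiv.swap i j ∈ U.consistent := by
    intro π hπ
    simp only [TIR.consistent, Finset.mem_filter, Finset.mem_univ, true_and] at hπ ⊢
    intro s t hst a ha b hb
    have hra : a ∈ U.ranked := Finset.mem_biUnion.mpr ⟨s, Finset.mem_univ s, ha⟩
    have hrb : b ∈ U.ranked := Finset.mem_biUnion.mpr ⟨t, Finset.mem_univ t, hb⟩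
    simp only [Equiv.Perm.mul_apply, hswap a hra, hswap b hrb]
    exact hπ s t hst a ha b hb
  have key : (U.consistent.filter (fun π => π i < π j)).card
      = (U.consistent.filter (fun π => π j < π i)).card := by
    apply Finset.card_bij (fun π _ => π * Equiv.swap i j)
    · intro π hπ
      simp only [Finset.mem_filter] at hπ ⊢
      refine ⟨hmem π hπ.1, ?_⟩
      simpa [Equiv.Perm.mul_apply, Equiv.swap_apply_left, Equiv.swap_apply_right]
        using hπ.2
    · intro π hπ σ hσ h
      exact mul_right_cancel h
    · intro σ hσ
      simp only [Finset.mem_filter] at hσ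
      refine ⟨σ * Equiv.swap i j, Finset.mem_filter.mpr ⟨hmem σ hσ.1, ?_⟩, ?_⟩
      · simpa [Equiv.Perm.mul_apply, Equiv.swap_apply_left, Equiv.swap_apply_right]
          using hσ.2
      · simp [mul_assoc]
  refine ⟨key, ?_⟩
  have hsplit : U.consistent.card
      = (U.consistent.filter (fun π => π i < π j)).card
        + (U.consistent.filter (fun π => π j < π i)).card := by
    rw [← Finset.card_filter_add_card_filter_not
      (p := fun π => π i < π j)]
    congr 2
    apply Finset.filter_congr
    intro π _
    simp only [not_lt]
    constructor
    · intro h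
      exact lt_of_le_of_ne h (fun he => hij (π.injective he.symm))
    · exact le_of_lt
  rw [hsplit, ← key]
  push_cast
  ring
end

section
/- Let U be a tied incomplete ranking on {1,…,n} with consistent set S_U and ranked item set B_U with |B_U| = k, and let i ∉ B_U be an unranked item. Then the relative position of i among the ranked items is uniform: for every r ∈ {0,1,…,k}, #{π ∈ S_U : #{b ∈ B_U : π(b) < π(i)} = r} = |S_U|/(k+1). -/
open Equiv Finset

namespace Equiv.Perm

variable {α : Type*} [LinearOrder α]

def numBefore (π : Perm α) (B : Finset α) (i : α) : ℕ := #{b ∈ B | π b < π i}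

def IsNextAfter (π : Perm α) (B : Finset α) (i b : α) : Prop :=
  b ∈ B ∧ π i < π b ∧ ∀ c ∈ B, π i < π c → π b ≤ π c

def IsLastBefore (π : Perm α) (B : Finset α) (i b : α) : Prop :=
  b ∈ B ∧ π b < π i ∧ ∀ c ∈ B, π c < π i → π c ≤ π b

variable {π : Perm α} {B : Finset α} {i b : α}

lemma exists_isNextAfter_of_numBefore_lt (hi : i ∉ B) (h : π.numBefore B i < #B) :
    ∃ b, π.IsNextAfter B i b := by
  have hne : {c ∈ B | π i < π c}.Nonempty := by
    by_contra hempty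
    refine h.ne (congrArg card (filter_true_of_mem fun c hc => ?_))
    have hci : π c ≠ π i := π.injective.ne (ne_of_mem_of_not_mem hc hi)
    exact hci.lt_of_le (not_lt.1 fun hlt => hempty ⟨c, mem_filter.2 ⟨hc, hlt⟩⟩)
  obtain ⟨b, hb, hmin⟩ := exists_min_image _ π hne
  rw [mem_filter] at hb
  exact ⟨b, hb.1, hb.2, fun c hc hic => hmin c (mem_filter.2 ⟨hc, hic⟩)⟩

lemma exists_isLastBefore_of_numBefore_pos (h : 0 < π.numBefore B i) :
    ∃ b, π.IsLastBefore B i b := by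
  obtain ⟨b, hb, hmax⟩ := exists_max_image _ π (card_pos.1 h)
  rw [mem_filter] at hb
  exact ⟨b, hb.1, hb.2, fun c hc hci => hmax c (mem_filter.2 ⟨hc, hci⟩)⟩

lemma IsNextAfter.unique {b' : α} (h : π.IsNextAfter B i b) (h' : π.IsNextAfter B i b') :
    b = b' :=
  π.injective <| le_antisymm (h.2.2 _ h'.1 h'.2.1) (h'.2.2 _ h.1 h.2.1)

lemma IsLastBefore.unique {b' : α} (h : π.IsLastBefore B i b) (h' : π.IsLastBefore B i b') :
    b = b' :=
  π.injective <| le_antisymm (h'.2.2 _ h.1 h.2.1) (h.2.2 _ h'.1 h'.2.1)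

lemma mul_swap_apply_of_mem_of_ne (hi : i ∉ B) {c : α} (hc : c ∈ B) (hcb : c ≠ b) :
    (π * swap i b) c = π c := by
  rw [mul_apply, swap_apply_of_ne_of_ne (ne_of_mem_of_not_mem hc hi) hcb]

lemma isLastBefore_mul_swap_iff (hi : i ∉ B) :
    (π * swap i b).IsLastBefore B i b ↔ π.IsNextAfter B i b := by
  simp only [IsLastBefore, IsNextAfter, mul_apply, swap_apply_left, swap_apply_right]
  refine and_congr_right fun hb => and_congr_right fun hib => forall₂_congr fun c hc => ?_
  rcases eq_or_ne c b with rfl | hcb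
  · simp
  · have hci : π c ≠ π i := π.injective.ne (ne_of_mem_of_not_mem hc hi)
    have hcb' : π c ≠ π b := π.injective.ne hcb
    rw [← mul_apply, mul_swap_apply_of_mem_of_ne hi hc hcb]
    constructor <;> intro h h' <;> by_contra hn <;> have := h (not_le.1 hn) <;> order

lemma IsLastBefore.exists_isNextAfter_mul_swap_eq {σ : Perm α} (h : σ.IsLastBefore B i b)
    (hi : i ∉ B) : ∃ π : Perm α, π.IsNextAfter B i b ∧ π * swap i b = σ :=
  ⟨σ * swap i b, (isLastBefore_mul_swap_iff hi).1 (by rwa [Equiv.mul_swap_mul_self]),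
    Equiv.mul_swap_mul_self i b σ⟩

lemma IsNextAfter.lt_iff_lt (h : π.IsNextAfter B i b) (hi : i ∉ B) {c : α} (hc : c ∈ B) :
    π c < π b ↔ π c < π i := by
  have hci : π c ≠ π i := π.injective.ne (ne_of_mem_of_not_mem hc hi)
  refine ⟨fun hcb => ?_, fun hci => hci.trans h.2.1⟩
  by_contra hic
  have := h.2.2 c hc (hci.symm.lt_of_le (not_lt.1 hic))
  order

lemma IsNextAfter.mul_swap_lt_mul_swap_iff (h : π.IsNextAfter B i b) (hi : i ∉ B) {a a' : α}
    (ha : a ∈ B) (ha' : a' ∈ B) :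
    (π * swap i b) a < (π * swap i b) a' ↔ π a < π a' := by
  have hσb : (π * swap i b) b = π i := by simp
  rcases eq_or_ne a b with rfl | hab
  · rcases eq_or_ne a' a with rfl | hab'
    · simp only [lt_irrefl]
    rw [hσb, mul_swap_apply_of_mem_of_ne hi ha' hab']
    exact ⟨fun hia' => (h.2.2 a' ha' hia').lt_of_ne (π.injective.ne hab'.symm),
      h.2.1.trans⟩
  rcases eq_or_ne a' b with rfl | hab'
  · rw [hσb, mul_swap_apply_of_mem_of_ne hi ha hab]
    exact (h.lt_iff_lt hi ha).symm
  · rw [mul_swap_apply_of_mem_of_ne hi ha hab, mul_swap_apply_of_mem_of_ne hi ha' hab']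

lemma IsNextAfter.numBefore_mul_swap (h : π.IsNextAfter B i b) (hi : i ∉ B) :
    (π * swap i b).numBefore B i = π.numBefore B i + 1 := by
  have hb : b ∉ {c ∈ B | π c < π i} := by simp [not_lt.2 h.2.1.le]
  rw [numBefore, numBefore, ← card_insert_of_notMem hb]
  congr 1
  ext c
  simp only [mem_filter, mem_insert, mul_apply, swap_apply_left]
  rcases eq_or_ne c b with rfl | hcb
  · simpa using ⟨h.1, h.2.1⟩
  · by_cases hc : c ∈ B
    · rw [← mul_apply, mul_swap_apply_of_mem_of_ne hi hc hcb, h.lt_iff_lt hi hc]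
      simp [hc, hcb]
    · simp [hc, hcb]

open Classical in
noncomputable def swapNextAfter (π : Perm α) (B : Finset α) (i : α) : Perm α :=
  if h : ∃ b, π.IsNextAfter B i b then π * swap i h.choose else π

open Classical in
noncomputable def swapLastBefore (π : Perm α) (B : Finset α) (i : α) : Perm α :=
  if h : ∃ b, π.IsLastBefore B i b then π * swap i h.choose else π

lemma IsNextAfter.swapNextAfter_eq (h : π.IsNextAfter B i b) :
    π.swapNextAfter B i = π * swap i b := by
  have hex : ∃ b, π.IsNextAfter B i b := ⟨b, h⟩
  rw [swapNextAfter, dif_pos hex, hex.choose_spec.unique h]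

lemma IsLastBefore.swapLastBefore_eq (h : π.IsLastBefore B i b) :
    π.swapLastBefore B i = π * swap i b := by
  have hex : ∃ b, π.IsLastBefore B i b := ⟨b, h⟩
  rw [swapLastBefore, dif_pos hex, hex.choose_spec.unique h]

lemma IsNextAfter.swapLastBefore_mul_swap (h : π.IsNextAfter B i b) (hi : i ∉ B) :
    (π * swap i b).swapLastBefore B i = π := by
  rw [((isLastBefore_mul_swap_iff hi).2 h).swapLastBefore_eq, Equiv.mul_swap_mul_self]

variable {S : Finset (Perm α)}
  (hS : ∀ π σ : Perm α, (∀ a ∈ B, ∀ a' ∈ B, σ a < σ a' ↔ π a < π a') → π ∈ S → σ ∈ S)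
include hS

lemma IsNextAfter.mul_swap_mem_iff (h : π.IsNextAfter B i b) (hi : i ∉ B) :
    π * swap i b ∈ S ↔ π ∈ S :=
  ⟨hS _ π fun _ ha _ ha' => (h.mul_swap_lt_mul_swap_iff hi ha ha').symm,
    hS π _ fun _ ha _ ha' => h.mul_swap_lt_mul_swap_iff hi ha ha'⟩

theorem card_filter_numBefore_succ (hi : i ∉ B) {r : ℕ} (hr : r < #B) :
    #{π ∈ S | π.numBefore B i = r + 1} = #{π ∈ S | π.numBefore B i = r} := by
  refine card_nbij' (swapLastBefore · B i) (swapNextAfter · B i) ?_ ?_ ?_ ?_ <;>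
    intro σ hσ <;> simp only [coe_filter, Set.mem_ofPred_eq] at hσ ⊢
  · obtain ⟨b, hb⟩ := exists_isLastBefore_of_numBefore_pos (show 0 < σ.numBefore B i by omega)
    obtain ⟨π, hπ, rfl⟩ := hb.exists_isNextAfter_mul_swap_eq hi
    rw [hπ.swapLastBefore_mul_swap hi, ← hπ.mul_swap_mem_iff hS hi]
    rw [hπ.numBefore_mul_swap hi] at hσ
    exact ⟨hσ.1, by omega⟩
  · obtain ⟨b, hb⟩ := exists_isNextAfter_of_numBefore_lt hi (show σ.numBefore B i < #B by omega)
    rw [hb.swapNextAfter_eq, hb.numBefore_mul_swap hi, hb.mul_swap_mem_iff hS hi]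
    exact ⟨hσ.1, by omega⟩
  · obtain ⟨b, hb⟩ := exists_isLastBefore_of_numBefore_pos (show 0 < σ.numBefore B i by omega)
    obtain ⟨π, hπ, rfl⟩ := hb.exists_isNextAfter_mul_swap_eq hi
    rw [hπ.swapLastBefore_mul_swap hi, hπ.swapNextAfter_eq]
  · obtain ⟨b, hb⟩ := exists_isNextAfter_of_numBefore_lt hi (show σ.numBefore B i < #B by omega)
    rw [hb.swapNextAfter_eq, hb.swapLastBefore_mul_swap hi]

theorem card_filter_numBefore_eq_card_filter_numBefore_zero (hi : i ∉ B) {r : ℕ}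
    (hr : r ≤ #B) : #{π ∈ S | π.numBefore B i = r} = #{π ∈ S | π.numBefore B i = 0} := by
  induction r with
  | zero => rfl
  | succ r ih => rw [card_filter_numBefore_succ hS hi hr, ih (r.le_succ.trans hr)]

theorem card_mul_card_filter_numBefore (hi : i ∉ B) {r : ℕ} (hr : r ≤ #B) :
    (#B + 1) * #{π ∈ S | π.numBefore B i = r} = #S := by
  have hfib : ∀ s ∈ range (#B + 1),
      #{π ∈ S | π.numBefore B i = s} = #{π ∈ S | π.numBefore B i = r} := fun s hs => by
    rw [card_filter_numBefore_eq_card_filter_numBefore_zero hS hi (mem_range_succ_iff.1 hs),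
      card_filter_numBefore_eq_card_filter_numBefore_zero hS hi hr]
  rw [card_eq_sum_card_fiberwise (s := S) (f := (numBefore · B i)) (t := range (#B + 1))
    fun π _ => mem_range_succ_iff.2 (card_filter_le _ _), sum_congr rfl hfib,
    sum_const, card_range, smul_eq_mul]

end Equiv.Perm

namespace TIR

variable {n : ℕ} {U : TIR n}

lemma mem_ranked {a : Fin n} {s : Fin U.K} (h : a ∈ U.A s) : a ∈ U.ranked :=
  mem_biUnion.2 ⟨s, mem_univ _, h⟩

lemma mem_consistent_of_lt_iff {π σ : Perm (Fin n)}
    (h : ∀ a ∈ U.ranked, ∀ a' ∈ U.ranked, σ a < σ a' ↔ π a < π a') (hπ : π ∈ U.consistent) :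
    σ ∈ U.consistent := by
  simp only [consistent, mem_filter, mem_univ, true_and] at hπ ⊢
  exact fun s t hst a ha b hb => (h a (mem_ranked ha) b (mem_ranked hb)).2 (hπ s t hst a ha b hb)

end TIR

/-- If `i` is unranked in `U` and `k = |B_U|`, then the relative position of `i`
among the ranked items is uniform over `{0,1,…,k}`: for each `r ≤ k`, the number of
consistent permutations placing exactly `r` ranked items before `i` is `|S_U|/(k+1)`. -/
theorem unranked_position_uniform (n : ℕ) (U : TIR n) (i : Fin n)
    (hi : i ∉ U.ranked) (r : ℕ) (hr : r ≤ U.ranked.card) :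
    ((U.consistent.filter
        (fun π => (U.ranked.filter (fun b => π b < π i)).card = r)).card : ℚ)
      = (U.consistent.card : ℚ) / ((U.ranked.card : ℚ) + 1) := by
  have key := Perm.card_mul_card_filter_numBefore (fun _ _ => TIR.mem_consistent_of_lt_iff) hi hr
  rw [eq_div_iff (by positivity), ← key, mul_comm]
  push_cast
  rfl
end

section
/- Let U be a tied incomplete ranking on {1,…,n} with consistent set S_U and ranked item set B_U, and let j ∈ A_s be a ranked item. Define the relative rank of j under π ∈ S_U as ρ_π(j) = #{b ∈ B_U : π(b) ≤ π(j)}. Then ρ_π(j) is uniformly distributed over the φ_U(j) values {τ_U(j), τ_U(j)+1, …, τ_U(j)+φ_U(j)−1}: for each such r, #{π ∈ S_U : ρ_π(j) = r} = |S_U|/φ_U(j). -/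
/-! For a consistent `π`, the ranked items placed at or before `j ∈ A s` are all items of the
earlier blocks together with the items of `A s` placed at or before `j`; so `ρ_π(j)` is `τ - 1`
plus the rank of `j` inside its own block. The set `S_U` is closed under right multiplication by
transpositions of two items of `A s`, and `(π, a) ↦ (π * swap j a, a)` matches the pairs in which
`a ∈ A s` has rank `k` under `π` with the pairs in which `j` has rank `k`. Every `π` has exactly
one item of rank `k` in `A s`, so `|S_U| = φ · #{π ∈ S_U | j has rank k}` for each `k ≤ φ`. -/

open Finset Equiv

section RelRank

variable {α : Type*} [LinearOrder α]

/-- The paper's `ρ_π(j)` is `relRank B_U π j`. -/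
def relRank (A : Finset α) (π : Perm α) (b : α) : ℕ :=
  #{c ∈ A | π c ≤ π b}

variable {A : Finset α} {π : Perm α}

lemma relRank_lt_relRank {a b : α} (hb : b ∈ A) (hab : π a < π b) :
    relRank A π a < relRank A π b := by
  refine card_lt_card ⟨fun c hc => ?_, fun hsub => ?_⟩
  · simp only [mem_filter] at hc ⊢
    exact ⟨hc.1, hc.2.trans hab.le⟩
  · have := (mem_filter.mp (hsub (mem_filter.mpr ⟨hb, le_rfl⟩))).2
    exact absurd hab this.not_gt

lemma relRank_injOn : Set.InjOn (relRank A π) A := by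
  intro a ha b hb h
  rcases lt_trichotomy (π a) (π b) with hlt | heq | hgt
  · exact absurd h (relRank_lt_relRank hb hlt).ne
  · exact π.injective heq
  · exact absurd h (relRank_lt_relRank ha hgt).ne'

lemma image_relRank : A.image (relRank A π) = Icc 1 #A := by
  refine eq_of_subset_of_card_le (fun k hk => ?_) ?_
  · obtain ⟨b, hb, rfl⟩ := mem_image.mp hk
    exact mem_Icc.mpr ⟨card_pos.mpr ⟨b, mem_filter.mpr ⟨hb, le_rfl⟩⟩,
      card_le_card (filter_subset _ _)⟩
  · rw [card_image_of_injOn relRank_injOn, Nat.card_Icc, Nat.add_sub_cancel]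

lemma card_filter_relRank_eq {k : ℕ} (hk : k ∈ Icc 1 #A) :
    #{a ∈ A | relRank A π a = k} = 1 := by
  refine le_antisymm (card_le_one.mpr fun a ha b hb => ?_) (card_pos.mpr ?_)
  · rw [mem_filter] at ha hb
    exact relRank_injOn ha.1 hb.1 (ha.2.trans hb.2.symm)
  · rw [← image_relRank (π := π)] at hk
    obtain ⟨a, ha, hak⟩ := mem_image.mp hk
    exact ⟨a, mem_filter.mpr ⟨ha, hak⟩⟩

lemma relRank_mul_of_apply_mem_iff {σ : Perm α} (hσ : ∀ c, σ c ∈ A ↔ c ∈ A) (b : α) :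
    relRank A (π * σ) b = relRank A π (σ b) := by
  refine card_bij' (fun c _ => σ c) (fun c _ => σ.symm c) (fun c hc => ?_) (fun c hc => ?_)
    (fun c _ => σ.symm_apply_apply c) (fun c _ => σ.apply_symm_apply c)
  · rw [mem_filter] at hc ⊢
    exact ⟨(hσ c).mpr hc.1, hc.2⟩
  · rw [mem_filter, ← hσ, Perm.mul_apply, Perm.mul_apply, apply_symm_apply]
    exact mem_filter.mp hc

lemma swap_apply_mem_iff {a b : α} (hab : a ∈ A ↔ b ∈ A) (c : α) :
    swap a b c ∈ A ↔ c ∈ A := by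
  rw [swap_apply_def]
  split_ifs <;> subst_vars <;> tauto

lemma card_filter_relRank_eq_mul_card {S : Finset (Perm α)}
    (hS : ∀ π ∈ S, ∀ a ∈ A, ∀ b ∈ A, π * swap a b ∈ S) {j : α} (hj : j ∈ A) {k : ℕ}
    (hk : k ∈ Icc 1 #A) : #{π ∈ S | relRank A π j = k} * #A = #S := by
  have relRank_mul_swap (π : Perm α) {a : α} (ha : a ∈ A) (b : α) :
      relRank A (π * swap j a) b = relRank A π (swap j a b) :=
    relRank_mul_of_apply_mem_iff (swap_apply_mem_iff (iff_of_true hj ha)) b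
  set P := {p ∈ S ×ˢ A | relRank A p.1 p.2 = k}
  have hP_card : #P = #S := by
    rw [card_filter, sum_product, card_eq_sum_ones S]
    refine sum_congr rfl fun π _ => ?_
    rw [← card_filter, card_filter_relRank_eq hk]
  have hP_card' : #P = #({π ∈ S | relRank A π j = k} ×ˢ A) := by
    refine card_bij' (fun p _ => (p.1 * swap j p.2, p.2)) (fun p _ => (p.1 * swap j p.2, p.2))
      (fun ⟨π, a⟩ hp => ?_) (fun ⟨π, a⟩ hp => ?_) (fun p _ => ?_) (fun p _ => ?_)
    · obtain ⟨⟨hπ, ha⟩, hπa⟩ : (π ∈ S ∧ a ∈ A) ∧ relRank A π a = k := by simpa [P] using hp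
      simp only [mem_product, mem_filter]
      refine ⟨⟨hS π hπ j hj a ha, ?_⟩, ha⟩
      rwa [relRank_mul_swap π ha, swap_apply_left]
    · obtain ⟨⟨hπ, hπj⟩, ha⟩ : (π ∈ S ∧ relRank A π j = k) ∧ a ∈ A := by simpa using hp
      simp only [P, mem_product, mem_filter]
      refine ⟨⟨hS π hπ j hj a ha, ha⟩, ?_⟩
      rwa [relRank_mul_swap π ha, swap_apply_right]
    · simp [mul_swap_mul_self]
    · simp [mul_swap_mul_self]
  rw [← hP_card, hP_card', card_product]

end RelRank

namespace TIR

variable {n : ℕ} (U : TIR n)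

lemma mem_A_iff_of_mem_A {s t : Fin U.K} {a b : Fin n} (ha : a ∈ U.A s) (hb : b ∈ U.A s) :
    a ∈ U.A t ↔ b ∈ U.A t := by
  by_cases hts : t = s
  · subst hts
    exact iff_of_true ha hb
  · exact iff_of_false (Finset.disjoint_right.mp (U.disjoint t s hts) ha)
      (Finset.disjoint_right.mp (U.disjoint t s hts) hb)

lemma mul_swap_mem_consistent {s : Fin U.K} {a b : Fin n} (ha : a ∈ U.A s) (hb : b ∈ U.A s)
    {π : Perm (Fin n)} (hπ : π ∈ U.consistent) : π * swap a b ∈ U.consistent := by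
  simp only [consistent, mem_filter, mem_univ, true_and, Perm.mul_apply] at hπ ⊢
  intro t t' htt' x hx y hy
  exact hπ t t' htt' _ ((swap_apply_mem_iff (U.mem_A_iff_of_mem_A ha hb) x).mpr hx)
    _ ((swap_apply_mem_iff (U.mem_A_iff_of_mem_A ha hb) y).mpr hy)

lemma relRank_ranked {s : Fin U.K} {j : Fin n} (hj : j ∈ U.A s)
    {π : Perm (Fin n)} (hπ : π ∈ U.consistent) :
    relRank U.ranked π j = ∑ t ∈ univ.filter (· < s), #(U.A t) + relRank (U.A s) π j := by
  simp only [consistent, mem_filter, mem_univ, true_and] at hπ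
  rw [relRank, ranked, filter_biUnion, card_biUnion
    (fun t _ t' _ htt' => disjoint_filter_filter (U.disjoint t t' htt')),
    ← sum_filter_add_sum_filter_not univ (· < s)]
  congr 1
  · refine sum_congr rfl fun t ht => congrArg card (filter_true_of_mem fun b hb => ?_)
    exact (hπ t s (mem_filter.mp ht).2 b hb j hj).le
  · refine sum_eq_single_of_mem s (by simp) fun t ht hts => ?_
    have hst : s < t := lt_of_le_of_ne (not_lt.mp (mem_filter.mp ht).2) (Ne.symm hts)
    exact card_eq_zero.mpr (filter_eq_empty_iff.mpr fun b hb => (hπ s t hst j hj b hb).not_ge)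

end TIR

/-- If `j ∈ A s` is a ranked item with minimal relative rank `τ = 1 + Σ_{t<s}|A t|`
and `φ = |A s|`, then the relative rank `ρ_π(j) = #{b ∈ B_U : π b ≤ π j}` is uniformly
distributed over `{τ, τ+1, …, τ+φ−1}`: for each such `r` the number of consistent
permutations with `ρ_π(j) = r` is `|S_U|/φ`. -/
theorem ranked_relative_rank_uniform (n : ℕ) (U : TIR n) (j : Fin n)
    (s : Fin U.K) (hj : j ∈ U.A s)
    (τ φ : ℕ)
    (hτ : τ = 1 + ∑ t ∈ Finset.univ.filter (fun t : Fin U.K => t < s), (U.A t).card)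
    (hφ : φ = (U.A s).card)
    (r : ℕ) (hr1 : τ ≤ r) (hr2 : r ≤ τ + φ - 1) :
    ((U.consistent.filter
        (fun π => (U.ranked.filter (fun b => π b ≤ π j)).card = r)).card : ℚ)
      = (U.consistent.card : ℚ) / (φ : ℚ) := by
  have hk : r + 1 - τ ∈ Icc 1 #(U.A s) := mem_Icc.mpr ⟨by omega, by omega⟩
  have hfiber : U.consistent.filter (fun π => relRank U.ranked π j = r)
      = U.consistent.filter (fun π => relRank (U.A s) π j = r + 1 - τ) :=
    filter_congr fun π hπ => by rw [U.relRank_ranked hj hπ]; omega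
  have hcount := card_filter_relRank_eq_mul_card
    (fun π hπ a ha b hb => U.mul_swap_mem_consistent ha hb hπ) hj hk
  have hφ_ne_zero : (φ : ℚ) ≠ 0 := by
    rw [hφ, Nat.cast_ne_zero]
    exact (U.nonempty s).card_ne_zero
  rw [eq_div_iff hφ_ne_zero, hφ]
  exact_mod_cast (congrArg (#· * #(U.A s)) hfiber).trans hcount
end

section
/- (Consistency of the kernel estimator) Let n ≥ 1, let p be a probability distribution on the finite set S_n of permutations of {1,…,n}, and let R ⊆ S_n. Let F assign to each permutation π a nonempty set F(π) ⊆ S_n with π ∈ F(π), such that for every π either F(π) ⊆ R or F(π) ∩ R = ∅ (each censoring set is either contained in R or disjoint from R). Let q(·|S) be, for each nonempty S ⊆ S_n, nonnegative weights supported on S and summing to 1. Let X_1, X_2, … be an i.i.d. sequence of random permutations with common law p, and fix 0 < h ≤ 1. Then the kernel estimator p̂_m(R) = (1/m) Σ_{i=1}^{m} Σ_{π∈R} Σ_{σ∈F(X_i)} q(σ|F(X_i)) K_h(T(π,σ)) converges almost surely to p(R) as m → ∞. -/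
/-
For `0 < h ≤ 1` the triangular kernel only sees Kendall distance `0`, i.e. `K_h(T(π,σ))` is the
indicator of `π = σ`. Since each censoring set `F x` lies entirely inside or entirely outside `R`
and the weights `q(·|F x)` sum to one, the `i`-th summand of the estimator collapses to the
indicator of `Xᵢ ∈ R`. The estimator is therefore the empirical frequency of the event `{Xᵢ ∈ R}`,
and the strong law of large numbers gives its almost sure convergence to `p(R)`.
-/

open MeasureTheory ProbabilityTheory Filter

/-- Normalization constant of the triangular kernel with bandwidth `h` for a fixed
center (the identity permutation):
`C(h) = Σ_{σ∈S_n} (1 − T(σ,π₀)/h)·I(T(σ,π₀) < h)`. -/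
noncomputable def triC (n : ℕ) (h : ℝ) : ℝ :=
  ∑ σ : Equiv.Perm (Fin n),
    (1 - (kendall σ 1 : ℝ) / h) * (if (kendall σ 1 : ℝ) < h then 1 else 0)

/-- The normalized triangular kernel on permutations:
`K_h(T(π,σ)) = (1 − T(π,σ)/h)·I(T(π,σ) < h)/C(h)`. -/
noncomputable def triK (n : ℕ) (h : ℝ) (π σ : Equiv.Perm (Fin n)) : ℝ :=
  ((1 - (kendall π σ : ℝ) / h) * (if (kendall π σ : ℝ) < h then 1 else 0)) / triC n h

open Topology

theorem kendall_eq_zero_iff {n : ℕ} {π σ : Equiv.Perm (Fin n)} : kendall π σ = 0 ↔ π = σ := by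
  refine ⟨fun h0 => ?_, ?_⟩
  · have hconc : ∀ i j, i < j → (π i < π j ↔ σ i < σ j) := fun i j hij => by
      have := Finset.filter_eq_empty_iff.1 (Finset.card_eq_zero.1 h0) (Finset.mem_univ (i, j))
      tauto
    -- the only strictly monotone self-map of the finite chain `Fin n` is the identity
    have hmono : StrictMono (σ ∘ π.symm) := by
      intro a b hab
      have hne : π.symm a ≠ π.symm b := π.symm.injective.ne hab.ne
      rcases hne.lt_or_gt with hij | hij
      · exact (hconc _ _ hij).1 (by simpa using hab)
      · have hnlt : ¬ σ (π.symm b) < σ (π.symm a) := fun hlt =>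
          hab.not_gt (by simpa using (hconc _ _ hij).2 hlt)
        exact (not_lt.1 hnlt).lt_of_ne (σ.injective.ne hne)
    ext x
    simpa using congrArg Fin.val (hmono.apply_eq (x := π x)).symm
  · rintro rfl
    simp only [kendall, Finset.card_eq_zero, Finset.filter_eq_empty_iff]
    exact fun _ _ hdisc => iff_not_self hdisc.2

theorem kendall_cast_lt_iff {n : ℕ} {h : ℝ} (hh0 : 0 < h) (hh1 : h ≤ 1)
    {π σ : Equiv.Perm (Fin n)} : (kendall π σ : ℝ) < h ↔ π = σ := by
  rw [← kendall_eq_zero_iff]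
  constructor
  · intro hlt
    exact_mod_cast Nat.lt_one_iff.1 (by exact_mod_cast hlt.trans_le hh1)
  · intro h0
    simpa [h0] using hh0

theorem triK_eq_ite {n : ℕ} {h : ℝ} (hh0 : 0 < h) (hh1 : h ≤ 1) (π σ : Equiv.Perm (Fin n)) :
    triK n h π σ = if π = σ then 1 else 0 := by
  have hweight : ∀ π σ : Equiv.Perm (Fin n),
      (1 - (kendall π σ : ℝ) / h) * (if (kendall π σ : ℝ) < h then 1 else 0) =
        if π = σ then 1 else 0 := fun π σ => by
    by_cases hπσ : π = σ
    · simp [hπσ, kendall_eq_zero_iff.2, hh0]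
    · simp [hπσ, kendall_cast_lt_iff hh0 hh1]
  have hC : triC n h = 1 := by simp [triC, hweight]
  rw [triK, hweight, hC, div_one]

theorem sum_triK_eq_ite {n : ℕ} {h : ℝ} (hh0 : 0 < h) (hh1 : h ≤ 1)
    (R : Finset (Equiv.Perm (Fin n))) (σ : Equiv.Perm (Fin n)) :
    ∑ π ∈ R, triK n h π σ = if σ ∈ R then 1 else 0 := by
  simp [triK_eq_ite hh0 hh1]

theorem sum_mul_ite_mem_eq_ite_mem {α : Type*} [DecidableEq α] {R S : Finset α} {w : α → ℝ}
    {x : α} (hx : x ∈ S) (hSR : S ⊆ R ∨ Disjoint S R) (hw : ∑ σ ∈ S, w σ = 1) :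
    ∑ σ ∈ S, w σ * (if σ ∈ R then 1 else 0) = if x ∈ R then 1 else 0 := by
  rcases hSR with hsub | hdisj
  · rw [if_pos (hsub hx)]
    exact (Finset.sum_congr rfl fun σ hσ => by simp [hsub hσ]).trans hw
  · rw [if_neg (Finset.disjoint_left.1 hdisj hx)]
    exact Finset.sum_eq_zero fun σ hσ => by simp [Finset.disjoint_left.1 hdisj hσ]

section DiscreteLaw

variable {Ω α : Type*} [MeasurableSpace Ω] {μ : Measure Ω} [MeasurableSpace α]

theorem identDistrib_of_measure_preimage_singleton_eq [Countable α] [MeasurableSingletonClass α]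
    {ν : Measure Ω} {X Y : Ω → α} (hX : Measurable X) (hY : Measurable Y)
    (h : ∀ a, μ (X ⁻¹' {a}) = ν (Y ⁻¹' {a})) : IdentDistrib X Y μ ν where
  aemeasurable_fst := hX.aemeasurable
  aemeasurable_snd := hY.aemeasurable
  map_eq := Measure.ext_of_singleton fun a => by
    rw [Measure.map_apply hX (measurableSet_singleton a),
      Measure.map_apply hY (measurableSet_singleton a), h]

theorem integral_comp_eq_sum [Fintype α] [DiscreteMeasurableSpace α] [IsFiniteMeasure μ]
    {X : Ω → α} (hX : Measurable X) (f : α → ℝ) :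
    ∫ ω, f (X ω) ∂μ = ∑ a, μ.real (X ⁻¹' {a}) * f a := by
  rw [← integral_map hX.aemeasurable Measurable.of_discrete.aestronglyMeasurable,
    integral_fintype Integrable.of_finite]
  simp [map_measureReal_apply hX (measurableSet_singleton _)]

theorem ae_tendsto_average_comp_of_iIndepFun [IsFiniteMeasure μ] [Fintype α]
    [DiscreteMeasurableSpace α] {X : ℕ → Ω → α} (hX : ∀ i, Measurable (X i))
    (hindep : iIndepFun X μ) {p : α → ℝ} (hp : ∀ a, 0 ≤ p a)
    (hlaw : ∀ i a, μ {ω | X i ω = a} = ENNReal.ofReal (p a)) (f : α → ℝ) :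
    ∀ᵐ ω ∂μ, Tendsto (fun m : ℕ => (∑ i ∈ Finset.range m, f (X i ω)) / m) atTop
      (𝓝 (∑ a, p a * f a)) := by
  have hident : ∀ i, IdentDistrib (X i) (X 0) μ μ := fun i =>
    identDistrib_of_measure_preimage_singleton_eq (hX i) (hX 0) fun a =>
      (hlaw i a).trans (hlaw 0 a).symm
  have hmean : ∫ ω, f (X 0 ω) ∂μ = ∑ a, p a * f a := by
    rw [integral_comp_eq_sum (hX 0)]
    refine Finset.sum_congr rfl fun a _ => ?_
    simp only [measureReal_def, Set.preimage, Set.mem_singleton_iff, hlaw,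
      ENNReal.toReal_ofReal (hp a)]
  have hslln := strong_law_ae_real (fun i ω => f (X i ω))
    (Integrable.of_finite.comp_measurable (hX 0))
    (fun i j hij => (hindep.indepFun hij).comp Measurable.of_discrete Measurable.of_discrete)
    (fun i => (hident i).comp Measurable.of_discrete)
  simpa only [hmean] using hslln

end DiscreteLaw

theorem kernel_estimator_consistency_general (n : ℕ)
    {Ω : Type*} [MeasurableSpace Ω] (μ : Measure Ω) [IsProbabilityMeasure μ]
    (p : Equiv.Perm (Fin n) → ℝ)
    (hp0 : ∀ σ, 0 ≤ p σ)
    (R : Finset (Equiv.Perm (Fin n)))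
    (F : Equiv.Perm (Fin n) → Finset (Equiv.Perm (Fin n)))
    (hFmem : ∀ π, π ∈ F π)
    (hFR : ∀ π, F π ⊆ R ∨ Disjoint (F π) R)
    (q : Finset (Equiv.Perm (Fin n)) → Equiv.Perm (Fin n) → ℝ)
    (hq1 : ∀ S : Finset (Equiv.Perm (Fin n)), S.Nonempty → ∑ σ ∈ S, q S σ = 1)
    (X : ℕ → Ω → Equiv.Perm (Fin n))
    (hXmeas : ∀ i, @Measurable Ω (Equiv.Perm (Fin n)) _ ⊤ (X i))
    (hXindep : iIndepFun (m := fun _ : ℕ => (⊤ : MeasurableSpace (Equiv.Perm (Fin n)))) X μ)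
    (hXlaw : ∀ i σ, μ {ω | X i ω = σ} = ENNReal.ofReal (p σ))
    (h : ℝ) (hh0 : 0 < h) (hh1 : h ≤ 1) :
    ∀ᵐ ω ∂μ, Tendsto
      (fun m : ℕ => (1 / (m : ℝ)) * ∑ i ∈ Finset.range m,
        ∑ π ∈ R, ∑ σ ∈ F (X i ω), q (F (X i ω)) σ * triK n h π σ)
      atTop (nhds (∑ π ∈ R, p π)) := by
  let : MeasurableSpace (Equiv.Perm (Fin n)) := ⊤
  have hsummand : ∀ x, ∑ π ∈ R, ∑ σ ∈ F x, q (F x) σ * triK n h π σ =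
      if x ∈ R then 1 else 0 := fun x => by
    simp only [Finset.sum_comm (s := R), ← Finset.mul_sum, sum_triK_eq_ite hh0 hh1]
    exact sum_mul_ite_mem_eq_ite_mem (hFmem x) (hFR x) (hq1 _ ⟨x, hFmem x⟩)
  filter_upwards [ae_tendsto_average_comp_of_iIndepFun hXmeas hXindep hp0 hXlaw
    fun x => if x ∈ R then 1 else 0] with ω hω
  simpa [hsummand, div_eq_inv_mul, Finset.sum_ite_mem] using hω

/-- Consistency of the kernel estimator: if each censoring set `F π` contains `π` and
is either contained in `R` or disjoint from `R`, the surrogate weights `q(·|S)` are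
nonnegative, supported on `S`, and sum to one, and `X₁, X₂, …` are i.i.d. random
permutations with law `p`, then for any bandwidth `0 < h ≤ 1` the kernel estimator
`p̂_m(R) = (1/m) Σ_{i<m} Σ_{π∈R} Σ_{σ∈F(Xᵢ)} q(σ|F(Xᵢ)) K_h(T(π,σ))`
converges almost surely to `p(R) = Σ_{π∈R} p(π)`. -/
theorem kernel_estimator_consistency (n : ℕ) (hn : 1 ≤ n)
    {Ω : Type*} [MeasurableSpace Ω] (μ : Measure Ω) [IsProbabilityMeasure μ]
    (p : Equiv.Perm (Fin n) → ℝ)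
    (hp0 : ∀ σ, 0 ≤ p σ) (hp1 : ∑ σ : Equiv.Perm (Fin n), p σ = 1)
    (R : Finset (Equiv.Perm (Fin n)))
    (F : Equiv.Perm (Fin n) → Finset (Equiv.Perm (Fin n)))
    (hFmem : ∀ π, π ∈ F π)
    (hFR : ∀ π, F π ⊆ R ∨ Disjoint (F π) R)
    (q : Finset (Equiv.Perm (Fin n)) → Equiv.Perm (Fin n) → ℝ)
    (hq0 : ∀ S σ, 0 ≤ q S σ)
    (hqsupp : ∀ (S : Finset (Equiv.Perm (Fin n))) σ, σ ∉ S → q S σ = 0)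
    (hq1 : ∀ S : Finset (Equiv.Perm (Fin n)), S.Nonempty → ∑ σ ∈ S, q S σ = 1)
    (X : ℕ → Ω → Equiv.Perm (Fin n))
    (hXmeas : ∀ i, @Measurable Ω (Equiv.Perm (Fin n)) _ ⊤ (X i))
    (hXindep : iIndepFun (m := fun _ : ℕ => (⊤ : MeasurableSpace (Equiv.Perm (Fin n)))) X μ)
    (hXlaw : ∀ i σ, μ {ω | X i ω = σ} = ENNReal.ofReal (p σ))
    (h : ℝ) (hh0 : 0 < h) (hh1 : h ≤ 1) :
    ∀ᵐ ω ∂μ, Tendsto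
      (fun m : ℕ => (1 / (m : ℝ)) * ∑ i ∈ Finset.range m,
        ∑ π ∈ R, ∑ σ ∈ F (X i ω), q (F (X i ω)) σ * triK n h π σ)
      atTop (nhds (∑ π ∈ R, p π)) :=
  kernel_estimator_consistency_general n μ p hp0 R F hFmem hFR q hq1 X hXmeas hXindep hXlaw h hh0
    hh1
end
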